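/- arXiv:1511.05356 — 4 statements merged into one kernel-verified Lean document; each statement's English description precedes it below -/
import Mathlib

section
/- Let m ≥ 1 be an integer and b > 0 a real bandwidth. Let f0 be the biweight density, μ_r its moments, H the 4×4 Hankel moment matrix, and K4 the associated fourth-order kernel. Define the discrete moments S_r = (1/b)·∑_{j=-m}^{m} (j/b)^r f0(j/b) for r = 0,1,2,3 (so S_1 = S_3 = 0 since f0 is even), the matrix H_s = H[1, (S_0, S_1, S_2, S_3)], the (2m+1)×4 matrix X_b whose row indexed by j ∈ {-m,…,m} is (1, j/b, (j/b)², (j/b)³), and the (2m+1)×(2m+1) diagonal matrix F_b with diagonal entries (1/b)·f0(j/b), j = -m,…,m. Assume H_s is invertible and ∑_{j=-m}^{m} K4(j/b) ≠ 0. Then the normalized symmetric filter weights w_j = K4(j/b) / ∑_{j'=-m}^{m} K4(j'/b), j = -m,…,m, satisfy, as a row vector, w' = e1'·H_s^{-1}·X_b'·F_b, where e1 = (1,0,0,0)'. -/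
open MeasureTheory Matrix

/-- The biweight density. -/
noncomputable def f0 (t : ℝ) : ℝ :=
  if t ∈ Set.Icc (-1 : ℝ) 1 then (15 / 16) * (1 - t ^ 2) ^ 2 else 0

/-- Moments of the biweight density. -/
noncomputable def mu (r : ℕ) : ℝ := ∫ t in (-1 : ℝ)..1, t ^ r * f0 t

/-- The 4×4 Hankel moment matrix of the biweight density. -/
noncomputable def Hmat : Matrix (Fin 4) (Fin 4) ℝ := fun i j => mu ((i : ℕ) + (j : ℕ))

/-- The fourth-order kernel associated with the biweight density. -/
noncomputable def K4 (t : ℝ) : ℝ :=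
  ((Hmat.updateCol 0 ![1, t, t ^ 2, t ^ 3]).det / Hmat.det) * f0 t

lemma key_cramer (v : Fin 4 → ℝ) :
    ∑ k, Hmat⁻¹ 0 k * v k = (Hmat.updateCol 0 v).det / Hmat.det := by
  have hinv : Hmat⁻¹ = Hmat.det⁻¹ • Hmat.adjugate := by
    rw [Matrix.inv_def, Ring.inverse_eq_inv]
  calc ∑ k, Hmat⁻¹ 0 k * v k = Hmat.det⁻¹ * ∑ k, Hmat.adjugate 0 k * v k := by
        rw [hinv, Finset.mul_sum]; congr 1; funext k
        simp [Matrix.smul_apply, mul_assoc]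
    _ = (Hmat.updateCol 0 v).det / Hmat.det := by
        rw [← Matrix.cramer_apply, Matrix.cramer_eq_adjugate_mulVec]
        simp [Matrix.mulVec, dotProduct]
        ring

lemma vec_pow (t : ℝ) : (![1, t, t^2, t^3] : Fin 4 → ℝ) = fun k : Fin 4 => t ^ (k:ℕ) := by
  funext k; fin_cases k <;> simp

lemma hK4 (t : ℝ) : K4 t = (∑ k, Hmat⁻¹ 0 k * t ^ (k:ℕ)) * f0 t := by
  rw [K4, vec_pow, key_cramer]


/-- **Proposition 3.1**: the normalized symmetric filter weights derived from the
fourth-order biweight kernel admit the matrix representation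
`w' = e1' ⬝ Hₛ⁻¹ ⬝ X_b' ⬝ F_b`.  The index `i : Fin (2*m+1)` corresponds to
`j = i - m ∈ {-m, …, m}`. -/
theorem symmetric_filter_matrix_representation
    (m : ℕ) (hm : 1 ≤ m) (b : ℝ) (hb : 0 < b)
    (S : ℕ → ℝ)
    (hS : ∀ r, S r = (1 / b) * ∑ j ∈ Finset.Icc (-(m : ℤ)) m, ((j : ℝ) / b) ^ r * f0 ((j : ℝ) / b))
    (Hs : Matrix (Fin 4) (Fin 4) ℝ)
    (hHs : Hs = Hmat.updateCol 0 ![S 0, S 1, S 2, S 3])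
    (Xb : Matrix (Fin (2 * m + 1)) (Fin 4) ℝ)
    (hXb : ∀ i k, Xb i k = (((i : ℝ) - m) / b) ^ (k : ℕ))
    (Fb : Matrix (Fin (2 * m + 1)) (Fin (2 * m + 1)) ℝ)
    (hFb : Fb = Matrix.diagonal fun i : Fin (2 * m + 1) => (1 / b) * f0 (((i : ℝ) - m) / b))
    (hHsinv : IsUnit Hs)
    (hsum : ∑ j ∈ Finset.Icc (-(m : ℤ)) m, K4 ((j : ℝ) / b) ≠ 0)
    (w : Fin (2 * m + 1) → ℝ)
    (hw : ∀ i, w i =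
      K4 (((i : ℝ) - m) / b) / ∑ j ∈ Finset.Icc (-(m : ℤ)) m, K4 ((j : ℝ) / b)) :
    w = Matrix.vecMul ![1, 0, 0, 0] (Hs⁻¹ * Xbᵀ * Fb) := by
  set c : ℝ := ∑ j ∈ Finset.Icc (-(m : ℤ)) m, K4 ((j : ℝ) / b) with hc
  -- S as vector: ![S 0, S 1, S 2, S 3] k = S k
  have hSvec : (![S 0, S 1, S 2, S 3] : Fin 4 → ℝ) = fun k : Fin 4 => S (k : ℕ) := by
    funext k; fin_cases k <;> rfl
  -- Σ_k H⁻¹ 0 k * S k = c / b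
  have hu : ∑ k : Fin 4, Hmat⁻¹ 0 k * S (k : ℕ) = c / b := by
    have : ∀ k : Fin 4, Hmat⁻¹ 0 k * S (k : ℕ) =
        (1 / b) * ∑ j ∈ Finset.Icc (-(m : ℤ)) m,
          Hmat⁻¹ 0 k * (((j : ℝ) / b) ^ (k : ℕ) * f0 ((j : ℝ) / b)) := by
      intro k; rw [hS]
      simp only [Finset.mul_sum]
      exact Finset.sum_congr rfl fun j _ => by ring
    rw [Finset.sum_congr rfl fun k _ => this k, ← Finset.mul_sum, Finset.sum_comm]
    have : ∀ j ∈ Finset.Icc (-(m : ℤ)) m,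
        ∑ k : Fin 4, Hmat⁻¹ 0 k * (((j : ℝ) / b) ^ (k : ℕ) * f0 ((j : ℝ) / b)) =
        K4 ((j : ℝ) / b) := by
      intro j _
      rw [hK4, Finset.sum_mul]
      exact Finset.sum_congr rfl fun k _ => by ring
    rw [Finset.sum_congr rfl this, ← hc]
    rw [one_div, inv_mul_eq_div]
  have hcb : c / b ≠ 0 := div_ne_zero hsum (ne_of_gt hb)
  -- the row vector r = e1ᵀ Hs⁻¹
  set r : Fin 4 → ℝ := fun k => (b / c) * Hmat⁻¹ 0 k with hr_def
  -- Hmat.det ≠ 0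
  have hdet : Hmat.det ≠ 0 := by
    intro h
    apply hsum
    refine Finset.sum_eq_zero fun j _ => ?_
    rw [K4, h, div_zero, zero_mul]
  have hdetU : IsUnit Hmat.det := isUnit_iff_ne_zero.mpr hdet
  -- e1 as if-then-else
  have he1 : (![1, 0, 0, 0] : Fin 4 → ℝ) = fun j : Fin 4 => if j = 0 then 1 else 0 := by
    funext j; fin_cases j <;> simp
  have hrHs : Matrix.vecMul r Hs = ![1, 0, 0, 0] := by
    funext j
    rw [Matrix.vecMul, he1]
    show ∑ k, r k * Hs k j = _
    by_cases hj : j = 0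
    · subst hj
      simp only [if_pos rfl, if_true]
      have : ∀ k : Fin 4, Hs k 0 = S (k : ℕ) := by
        intro k; rw [hHs, Matrix.updateCol_self, hSvec]
      rw [Finset.sum_congr rfl fun k _ => by rw [this k, hr_def]]
      have : ∑ k : Fin 4, b / c * Hmat⁻¹ 0 k * S (k : ℕ) =
          (b / c) * ∑ k : Fin 4, Hmat⁻¹ 0 k * S (k : ℕ) := by
        rw [Finset.mul_sum]; exact Finset.sum_congr rfl fun k _ => by ring
      rw [this, hu]
      field_simp
    · simp only [if_neg hj]
      have hcol : ∀ k : Fin 4, Hs k j = Hmat k j := by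
        intro k; rw [hHs, Matrix.updateCol_ne hj]
      calc ∑ k, r k * Hs k j = (b / c) * ∑ k, Hmat⁻¹ 0 k * Hmat k j := by
            rw [Finset.mul_sum]
            exact Finset.sum_congr rfl fun k _ => by rw [hcol k, hr_def]; ring
        _ = (b / c) * (Hmat⁻¹ * Hmat) 0 j := by rw [Matrix.mul_apply]
        _ = 0 := by
            rw [Matrix.nonsing_inv_mul _ hdetU, Matrix.one_apply_ne (Ne.symm hj), mul_zero]
  have hHsdet : IsUnit Hs.det := (Matrix.isUnit_iff_isUnit_det Hs).mp hHsinv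
  have hr : Matrix.vecMul (![1, 0, 0, 0] : Fin 4 → ℝ) Hs⁻¹ = r := by
    rw [← hrHs, Matrix.vecMul_vecMul, Matrix.mul_nonsing_inv _ hHsdet, Matrix.vecMul_one]
  -- finish
  funext i
  rw [Matrix.mul_assoc, ← Matrix.vecMul_vecMul, hr]
  rw [hw i]
  symm
  have hXF : ∀ k : Fin 4, (Xbᵀ * Fb) k i =
      (((i : ℝ) - m) / b) ^ (k : ℕ) * ((1 / b) * f0 (((i : ℝ) - m) / b)) := by
    intro k
    rw [hFb, Matrix.mul_diagonal, Matrix.transpose_apply, hXb]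
  show ∑ k, r k * (Xbᵀ * Fb) k i = _
  rw [Finset.sum_congr rfl fun k _ => by rw [hXF k]]
  have : ∑ k : Fin 4, r k * ((((i : ℝ) - m) / b) ^ (k : ℕ) *
      ((1 / b) * f0 (((i : ℝ) - m) / b))) =
      (b / c) * (∑ k : Fin 4, Hmat⁻¹ 0 k * (((i : ℝ) - m) / b) ^ (k : ℕ)) *
        ((1 / b) * f0 (((i : ℝ) - m) / b)) := by
    rw [Finset.mul_sum, Finset.sum_mul]
    exact Finset.sum_congr rfl fun k _ => by rw [hr_def]; ring
  rw [this, hK4]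
  field_simp
end

section
/- Let m ≥ 1 be an integer, q ∈ {0,…,m−1}, and b_q > 0 a real bandwidth. Let f0 be the biweight density, μ_r its moments, H the 4×4 Hankel moment matrix, and K4 the associated fourth-order kernel. Define the truncated discrete moments S_r^q = (1/b_q)·∑_{j=-m}^{q} (j/b_q)^r f0(j/b_q) for r = 0,1,2,3, the matrix H_a = H[1, (S_0^q, S_1^q, S_2^q, S_3^q)], the (m+q+1)×4 matrix X_q whose row indexed by j ∈ {-m,…,q} is (1, j/b_q, (j/b_q)², (j/b_q)³), and the (m+q+1)×(m+q+1) diagonal matrix F_q with diagonal entries (1/b_q)·f0(j/b_q), j = -m,…,q. Assume H_a is invertible and ∑_{j=-m}^{q} K4(j/b_q) ≠ 0. Then the asymmetric filter weights w_{q,j} = K4(j/b_q) / ∑_{j'=-m}^{q} K4(j'/b_q), j = -m,…,q, satisfy, as a row vector, w_q' = e1'·H_a^{-1}·X_q'·F_q, where e1 = (1,0,0,0)'. -/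
open MeasureTheory Matrix

/-- **Proposition 3.2**: the asymmetric filter weights derived from the fourth-order
biweight kernel admit the matrix representation `w_q' = e1' ⬝ Hₐ⁻¹ ⬝ X_q' ⬝ F_q`.
The index `i : Fin (m + q + 1)` corresponds to `j = i - m ∈ {-m, …, q}`. -/
theorem asymmetric_filter_matrix_representation
    (m : ℕ) (hm : 1 ≤ m) (q : ℕ) (hq : q ≤ m - 1) (bq : ℝ) (hbq : 0 < bq)
    (Sq : ℕ → ℝ)
    (hSq : ∀ r, Sq r =
      (1 / bq) * ∑ j ∈ Finset.Icc (-(m : ℤ)) q, ((j : ℝ) / bq) ^ r * f0 ((j : ℝ) / bq))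
    (Ha : Matrix (Fin 4) (Fin 4) ℝ)
    (hHa : Ha = Hmat.updateCol 0 ![Sq 0, Sq 1, Sq 2, Sq 3])
    (Xq : Matrix (Fin (m + q + 1)) (Fin 4) ℝ)
    (hXq : ∀ i k, Xq i k = (((i : ℝ) - m) / bq) ^ (k : ℕ))
    (Fq : Matrix (Fin (m + q + 1)) (Fin (m + q + 1)) ℝ)
    (hFq : Fq = Matrix.diagonal fun i : Fin (m + q + 1) => (1 / bq) * f0 (((i : ℝ) - m) / bq))
    (hHainv : IsUnit Ha)
    (hsum : ∑ j ∈ Finset.Icc (-(m : ℤ)) q, K4 ((j : ℝ) / bq) ≠ 0)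
    (w : Fin (m + q + 1) → ℝ)
    (hw : ∀ i, w i =
      K4 (((i : ℝ) - m) / bq) / ∑ j ∈ Finset.Icc (-(m : ℤ)) q, K4 ((j : ℝ) / bq)) :
    w = Matrix.vecMul ![1, 0, 0, 0] (Ha⁻¹ * Xqᵀ * Fq) := by
  set S : ℝ := ∑ j ∈ Finset.Icc (-(m : ℤ)) q, K4 ((j : ℝ) / bq) with hS
  set D : ℝ → ℝ := fun t => (Hmat.updateCol 0 ![1, t, t ^ 2, t ^ 3]).det with hD
  have hbq' : bq ≠ 0 := ne_of_gt hbq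
  have hdet : Hmat.det ≠ 0 := by
    intro h
    apply hsum
    refine Finset.sum_eq_zero fun j _ => ?_
    simp [K4, h]
  have hK4 : ∀ t, K4 t = D t / Hmat.det * f0 t := fun t => rfl
  have hv : ∀ t : ℝ, (![1, t, t ^ 2, t ^ 3] : Fin 4 → ℝ) = fun k : Fin 4 => t ^ (k : ℕ) := by
    intro t
    funext k
    fin_cases k <;> simp
  have hSv : (![Sq 0, Sq 1, Sq 2, Sq 3] : Fin 4 → ℝ) = fun k : Fin 4 => Sq (k : ℕ) := by
    funext k
    fin_cases k <;> simp
  have hcol : (fun k : Fin 4 => Sq (k : ℕ)) =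
      ∑ j ∈ Finset.Icc (-(m : ℤ)) q, ((1 / bq) * f0 ((j : ℝ) / bq)) •
        (fun k : Fin 4 => ((j : ℝ) / bq) ^ (k : ℕ)) := by
    funext k
    rw [Finset.sum_apply]
    simp only [Pi.smul_apply, smul_eq_mul]
    rw [hSq, Finset.mul_sum]
    exact Finset.sum_congr rfl fun j _ => by ring
  have hHadet : Ha.det = (1 / bq) * (Hmat.det * S) := by
    have h1 : Ha.det = Hmat.cramer (fun k : Fin 4 => Sq (k : ℕ)) 0 := by
      rw [hHa, hSv, Matrix.cramer_apply]
    rw [h1, hcol, map_sum, Finset.sum_apply]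
    simp only [LinearMap.map_smul, Pi.smul_apply, smul_eq_mul, Matrix.cramer_apply]
    rw [hS, Finset.mul_sum, Finset.mul_sum]
    refine Finset.sum_congr rfl fun j _ => ?_
    rw [hK4, ← hv, Matrix.det_updateCol_smul]
    have hDj : (Hmat.updateCol 0
        ![1, (j : ℝ) / bq, ((j : ℝ) / bq) ^ 2, ((j : ℝ) / bq) ^ 3]).det = D ((j : ℝ) / bq) := rfl
    rw [hDj]
    field_simp
  have hHadet' : Ha.det ≠ 0 :=
    Matrix.isUnit_iff_isUnit_det Ha |>.mp hHainv |>.ne_zero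
  have hSne : S ≠ 0 := hsum
  have hupd : ∀ c : Fin 4 → ℝ, Ha.updateCol 0 c = Hmat.updateCol 0 c := by
    intro c
    rw [hHa]
    ext i j
    by_cases h : j = 0 <;> simp [Matrix.updateCol_apply, h]
  funext i
  set t : ℝ := ((i : ℝ) - m) / bq with ht
  have hvec : (fun k : Fin 4 => Xq i k) = ![1, t, t ^ 2, t ^ 3] := by
    rw [hv t]
    funext k
    rw [hXq, ht]
  have hRHS : Matrix.vecMul ![1, 0, 0, 0] (Ha⁻¹ * Xqᵀ * Fq) i =
      (Ha.det⁻¹ * D t) * ((1 / bq) * f0 t) := by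
    have e1 : Matrix.vecMul ![1, 0, 0, 0] (Ha⁻¹ * Xqᵀ * Fq) i =
        (Ha⁻¹ * Xqᵀ * Fq) 0 i := by
      simp [Matrix.vecMul, dotProduct, Fin.sum_univ_four]
    rw [e1, hFq, Matrix.mul_diagonal]
    have e2 : (Ha⁻¹ * Xqᵀ) 0 i = (Ha⁻¹ *ᵥ ![1, t, t ^ 2, t ^ 3]) 0 := by
      rw [Matrix.mul_apply, Matrix.mulVec]
      simp only [dotProduct, Matrix.transpose_apply]
      rw [← hvec]
    rw [e2, Matrix.inv_def, Matrix.smul_mulVec, ← Matrix.cramer_eq_adjugate_mulVec,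
      Pi.smul_apply, smul_eq_mul, Matrix.cramer_apply, hupd]
    rw [Ring.inverse_eq_inv']
  rw [hRHS, hw, hK4, hHadet]
  field_simp
  ring
end

section
/- Let m ≥ 1 be an integer, q ∈ {0,…,m−1}, and b_q > 0 a real bandwidth. Let f0 be the biweight density, μ_r its moments, H the 4×4 Hankel moment matrix, and K4 the associated fourth-order kernel. Define the truncated discrete moments S_r^q = (1/b_q)·∑_{j=-m}^{q} (j/b_q)^r f0(j/b_q), and assume S_0^q·μ_4 − S_2^q·μ_2 ≠ 0. Then for every j ∈ {-m,…,q}, the asymmetric filter weight w_{q,j} = K4(j/b_q) / ∑_{j'=-m}^{q} K4(j'/b_q) is given explicitly by w_{q,j} = [ (μ_4 − μ_2·(j/b_q)²) / (S_0^q·μ_4 − S_2^q·μ_2) ] · (1/b_q)·f0(j/b_q). -/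
open MeasureTheory Matrix

open intervalIntegral in
lemma mu_eq (r : ℕ) : mu r =
    (15/16) * ((1 - (-1:ℝ)^(r+1))/(r+1)) - (15/8) * ((1 - (-1:ℝ)^(r+3))/(r+3))
      + (15/16) * ((1 - (-1:ℝ)^(r+5))/(r+5)) := by
  have hcongr : mu r = ∫ t in (-1:ℝ)..1,
      ((15/16) * t^r - (15/8) * t^(r+2) + (15/16) * t^(r+4)) := by
    unfold mu
    apply intervalIntegral.integral_congr
    intro t ht
    rw [Set.uIcc_of_le (by norm_num : (-1:ℝ) ≤ 1)] at ht
    simp only [f0, if_pos ht]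
    ring
  have i1 : IntervalIntegrable (fun t : ℝ => (15/16) * t^r) volume (-1) 1 :=
    (continuous_const.mul (continuous_pow r)).intervalIntegrable _ _
  have i2 : IntervalIntegrable (fun t : ℝ => (15/8) * t^(r+2)) volume (-1) 1 :=
    (continuous_const.mul (continuous_pow _)).intervalIntegrable _ _
  have i3 : IntervalIntegrable (fun t : ℝ => (15/16) * t^(r+4)) volume (-1) 1 :=
    (continuous_const.mul (continuous_pow _)).intervalIntegrable _ _
  rw [hcongr, intervalIntegral.integral_add (i1.sub i2) i3,
    intervalIntegral.integral_sub i1 i2, intervalIntegral.integral_const_mul,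
    intervalIntegral.integral_const_mul, intervalIntegral.integral_const_mul,
    integral_pow, integral_pow, integral_pow]
  push_cast
  ring

lemma mu0 : mu 0 = 1 := by rw [mu_eq]; norm_num
lemma mu1 : mu 1 = 0 := by rw [mu_eq]; norm_num
lemma mu2 : mu 2 = 1/7 := by rw [mu_eq]; norm_num
lemma mu3 : mu 3 = 0 := by rw [mu_eq]; norm_num
lemma mu4 : mu 4 = 1/21 := by rw [mu_eq]; norm_num
lemma mu5 : mu 5 = 0 := by rw [mu_eq]; norm_num
lemma mu6 : mu 6 = 5/231 := by rw [mu_eq]; norm_num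

lemma det_fin_four' (M : Matrix (Fin 4) (Fin 4) ℝ) :
    M.det =
      M 0 0 * (M 1 1 * (M 2 2 * M 3 3 - M 2 3 * M 3 2) - M 1 2 * (M 2 1 * M 3 3 - M 2 3 * M 3 1)
        + M 1 3 * (M 2 1 * M 3 2 - M 2 2 * M 3 1))
      - M 0 1 * (M 1 0 * (M 2 2 * M 3 3 - M 2 3 * M 3 2) - M 1 2 * (M 2 0 * M 3 3 - M 2 3 * M 3 0)
        + M 1 3 * (M 2 0 * M 3 2 - M 2 2 * M 3 0))
      + M 0 2 * (M 1 0 * (M 2 1 * M 3 3 - M 2 3 * M 3 1) - M 1 1 * (M 2 0 * M 3 3 - M 2 3 * M 3 0)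
        + M 1 3 * (M 2 0 * M 3 1 - M 2 1 * M 3 0))
      - M 0 3 * (M 1 0 * (M 2 1 * M 3 2 - M 2 2 * M 3 1) - M 1 1 * (M 2 0 * M 3 2 - M 2 2 * M 3 0)
        + M 1 2 * (M 2 0 * M 3 1 - M 2 1 * M 3 0)) := by
  rw [Matrix.det_succ_row_zero]
  simp [Fin.sum_univ_succ, Matrix.det_fin_three, Matrix.submatrix_apply, Fin.succAbove]
  have h3 : (Fin.succ 2 : Fin 4) = 3 := rfl
  have h2 : (Fin.castSucc 2 : Fin 4) = 2 := rfl
  ring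

lemma K4_eq (t : ℝ) : K4 t = (7/4 - 21/4 * t^2) * f0 t := by
  have hH : Hmat = !![mu 0, mu 1, mu 2, mu 3; mu 1, mu 2, mu 3, mu 4;
      mu 2, mu 3, mu 4, mu 5; mu 3, mu 4, mu 5, mu 6] := by
    ext i j; fin_cases i <;> fin_cases j <;> rfl
  have hU : Hmat.updateCol 0 ![1, t, t ^ 2, t ^ 3] =
      !![1, mu 1, mu 2, mu 3; t, mu 2, mu 3, mu 4;
        t^2, mu 3, mu 4, mu 5; t^3, mu 4, mu 5, mu 6] := by
    ext i j
    fin_cases i <;> fin_cases j <;>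
      simp [Matrix.updateCol_apply, Hmat] <;> rfl
  unfold K4
  congr 1
  rw [hU, hH, det_fin_four', det_fin_four']
  simp only [Matrix.of_apply, Matrix.cons_val', Matrix.cons_val_zero, Matrix.cons_val_one, Matrix.cons_val_two, Matrix.cons_val_three, Matrix.empty_val', Matrix.cons_val_fin_one, Matrix.head_cons, Matrix.tail_cons]
  norm_num [mu0, mu1, mu2, mu3, mu4, mu5, mu6]
  ring

/-- The asymmetric filter weights derived from the fourth-order biweight kernel
admit the explicit form
`w_{q,j} = [(μ₄ − μ₂ (j/b_q)²) / (S₀^q μ₄ − S₂^q μ₂)] ⬝ (1/b_q) f₀(j/b_q)`. -/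
theorem asymmetric_filter_explicit_weights
    (m : ℕ) (hm : 1 ≤ m) (q : ℕ) (hq : q ≤ m - 1) (bq : ℝ) (hbq : 0 < bq)
    (Sq : ℕ → ℝ)
    (hSq : ∀ r, Sq r =
      (1 / bq) * ∑ j ∈ Finset.Icc (-(m : ℤ)) q, ((j : ℝ) / bq) ^ r * f0 ((j : ℝ) / bq))
    (hne : Sq 0 * mu 4 - Sq 2 * mu 2 ≠ 0) :
    ∀ j ∈ Finset.Icc (-(m : ℤ)) q,
      K4 ((j : ℝ) / bq) / (∑ j' ∈ Finset.Icc (-(m : ℤ)) q, K4 ((j' : ℝ) / bq)) =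
        ((mu 4 - mu 2 * ((j : ℝ) / bq) ^ 2) / (Sq 0 * mu 4 - Sq 2 * mu 2)) *
          ((1 / bq) * f0 ((j : ℝ) / bq)) := by
  intro j hj
  have hb : bq ≠ 0 := ne_of_gt hbq
  have hne' : Sq 0 * (1/21 : ℝ) - Sq 2 * (1/7) ≠ 0 := by rwa [mu4, mu2] at hne
  have hsum : (∑ j' ∈ Finset.Icc (-(m : ℤ)) q, K4 ((j' : ℝ) / bq)) =
      bq * ((7/4) * Sq 0 - (21/4) * Sq 2) := by
    have hs0 := hSq 0
    have hs2 := hSq 2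
    have e0 : ∑ j' ∈ Finset.Icc (-(m : ℤ)) q, f0 ((j' : ℝ) / bq) = bq * Sq 0 := by
      rw [hs0]
      field_simp
    have e2 : ∑ j' ∈ Finset.Icc (-(m : ℤ)) q, ((j' : ℝ) / bq) ^ 2 * f0 ((j' : ℝ) / bq)
        = bq * Sq 2 := by
      rw [hs2]
      field_simp
    calc (∑ j' ∈ Finset.Icc (-(m : ℤ)) q, K4 ((j' : ℝ) / bq))
        = ∑ j' ∈ Finset.Icc (-(m : ℤ)) q,
            ((7/4) * f0 ((j' : ℝ) / bq) - (21/4) * (((j' : ℝ) / bq) ^ 2 * f0 ((j' : ℝ) / bq))) := by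
          refine Finset.sum_congr rfl fun j' _ => ?_
          rw [K4_eq]; ring
      _ = (7/4) * (∑ j' ∈ Finset.Icc (-(m : ℤ)) q, f0 ((j' : ℝ) / bq))
            - (21/4) * (∑ j' ∈ Finset.Icc (-(m : ℤ)) q,
                ((j' : ℝ) / bq) ^ 2 * f0 ((j' : ℝ) / bq)) := by
          rw [Finset.sum_sub_distrib, Finset.mul_sum, Finset.mul_sum]
      _ = bq * ((7/4) * Sq 0 - (21/4) * Sq 2) := by rw [e0, e2]; ring
  rw [K4_eq, hsum, mu4, mu2]
  have hd : bq * ((7/4) * Sq 0 - (21/4) * Sq 2) ≠ 0 := by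
    apply mul_ne_zero hb
    intro h
    apply hne'
    linarith
  set x := (j : ℝ) / bq with hx
  set D : ℝ := Sq 0 * (1/21) - Sq 2 * (1/7) with hD
  have h2 : (7/4 : ℝ) * Sq 0 - 21/4 * Sq 2 = (147/4) * D := by rw [hD]; ring
  rw [div_eq_iff hd, h2]
  field_simp [hb, hne']
  ring
end

section
/- Let m ≥ 1, let w_{-m}, …, w_m be real symmetric filter weights (w_{-j} = w_j) whose transfer function Γ(ω) = ∑_{j=-m}^{m} w_j·exp(−i·2π·ω·j) satisfies Γ(ω) ≥ 0 for all ω ∈ [0, 1/2], so that the gain is G(ω) = Γ(ω) and the phase is zero. Let q ∈ {0,…,m−1}, let w_{q,-m}, …, w_{q,q} be real asymmetric filter weights with transfer function Γ_q(ω) = ∑_{j=-m}^{q} w_{q,j}·exp(−i·2π·ω·j), gain G_q(ω) = |Γ_q(ω)|, and let θ_q(ω) be any real number with Γ_q(ω) = G_q(ω)·exp(−i·θ_q(ω)). Then for every ω ∈ [0, 1/2]: |Γ_q(ω) − Γ(ω)|² = (G_q(ω) − G(ω))² + 2·G_q(ω)·G(ω)·(1 − cos θ_q(ω)) = (G_q(ω)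 − G(ω))² + 4·G_q(ω)·G(ω)·sin²(θ_q(ω)/2), and consequently the mean square filter revision error decomposes as 2·∫_0^{1/2} |Γ_q(ω) − Γ(ω)|² dω = 2·∫_0^{1/2} (G_q(ω) − G(ω))² dω + 8·∫_0^{1/2} G_q(ω)·G(ω)·sin²(θ_q(ω)/2) dω, provided θ_q is chosen measurable. -/
open Complex Real MeasureTheory

private lemma normSq_polar_sub (a b θ : ℝ) :
    Complex.normSq ((a:ℂ) * Complex.exp (-(θ * Complex.I)) - b) =
      (a - b)^2 + 2*a*b*(1 - Real.cos θ) := by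
  rw [show -((θ:ℂ) * Complex.I) = (-(θ:ℂ)) * Complex.I by ring, Complex.exp_mul_I]
  simp only [Complex.cos_neg, Complex.sin_neg, ← Complex.ofReal_cos, ← Complex.ofReal_sin,
    Complex.normSq_apply, Complex.sub_re, Complex.sub_im, Complex.add_re, Complex.add_im,
    Complex.mul_re, Complex.mul_im, Complex.neg_re, Complex.neg_im,
    Complex.ofReal_re, Complex.ofReal_im, Complex.I_re, Complex.I_im]
  ring_nf
  linear_combination (a^2) * (Real.sin_sq_add_cos_sq θ)

private lemma one_sub_cos_eq (θ : ℝ) : 1 - Real.cos θ = 2 * Real.sin (θ/2)^2 := by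
  have h := Real.cos_sq (θ/2)
  have h2 : 2 * (θ/2) = θ := by ring
  rw [h2] at h
  have h3 := Real.sin_sq_add_cos_sq (θ/2)
  linarith

/-- Decomposition of the filter revision error by the law of cosines: pointwise on
`[0, 1/2]`,
`|Γ_q(ω) − Γ(ω)|² = (G_q(ω) − G(ω))² + 2 G_q G (1 − cos θ_q) = (G_q − G)² + 4 G_q G sin²(θ_q/2)`,
and consequently the mean square filter revision error decomposes as
`2∫|Γ_q − Γ|² = 2∫(G_q − G)² + 8∫ G_q G sin²(θ_q/2)`. -/
theorem filter_revision_error_decomposition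
    (m : ℕ) (hm : 1 ≤ m) (w : ℤ → ℝ)
    (hsym : ∀ j ∈ Finset.Icc (1 : ℤ) m, w (-j) = w j)
    (Γ : ℝ → ℂ)
    (hΓ : ∀ ω : ℝ, Γ ω = ∑ j ∈ Finset.Icc (-(m : ℤ)) m,
      (w j : ℂ) * Complex.exp (-(Complex.I * (2 * Real.pi * ω * j))))
    (hΓpos : ∀ ω ∈ Set.Icc (0 : ℝ) (1 / 2), 0 ≤ (Γ ω).re)
    (G : ℝ → ℝ) (hG : ∀ ω, G ω = (Γ ω).re)
    (q : ℕ) (hq : q ≤ m - 1) (wq : ℤ → ℝ)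
    (Γq : ℝ → ℂ)
    (hΓq : ∀ ω : ℝ, Γq ω = ∑ j ∈ Finset.Icc (-(m : ℤ)) q,
      (wq j : ℂ) * Complex.exp (-(Complex.I * (2 * Real.pi * ω * j))))
    (Gq : ℝ → ℝ) (hGq : ∀ ω, Gq ω = ‖Γq ω‖)
    (θq : ℝ → ℝ) (hθmeas : Measurable θq)
    (hθ : ∀ ω : ℝ, Γq ω = (Gq ω : ℂ) * Complex.exp (-(θq ω * Complex.I))) :
    (∀ ω ∈ Set.Icc (0 : ℝ) (1 / 2),
      ‖Γq ω - Γ ω‖ ^ 2 =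
        (Gq ω - G ω) ^ 2 + 2 * Gq ω * G ω * (1 - Real.cos (θq ω)) ∧
      ‖Γq ω - Γ ω‖ ^ 2 =
        (Gq ω - G ω) ^ 2 + 4 * Gq ω * G ω * Real.sin (θq ω / 2) ^ 2) ∧
    2 * ∫ ω in (0 : ℝ)..(1 / 2), ‖Γq ω - Γ ω‖ ^ 2 =
      2 * (∫ ω in (0 : ℝ)..(1 / 2), (Gq ω - G ω) ^ 2) +
        8 * ∫ ω in (0 : ℝ)..(1 / 2), Gq ω * G ω * Real.sin (θq ω / 2) ^ 2 := by
  -- Γ is real valued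
  have hsym' : ∀ j ∈ Finset.Icc (-(m:ℤ)) m, w (-j) = w j := by
    intro j hj
    simp only [Finset.mem_Icc] at hj
    rcases lt_trichotomy j 0 with h | h | h
    · have := hsym (-j) (by simp only [Finset.mem_Icc]; omega)
      simpa using this.symm
    · simp [h]
    · exact hsym j (by simp only [Finset.mem_Icc]; omega)
  have hΓreal : ∀ ω, ((Γ ω).re : ℂ) = Γ ω := by
    intro ω
    rw [← Complex.conj_eq_iff_re, hΓ ω, map_sum]
    refine Finset.sum_equiv (Equiv.neg ℤ)
      (by intro i; simp only [Finset.mem_Icc, Equiv.neg_apply]; omega) ?_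
    intro j hj
    simp only [Equiv.neg_apply, map_mul, Complex.conj_ofReal, ← Complex.exp_conj, map_neg,
      map_mul, Complex.conj_I, Complex.conj_ofReal, map_ofNat, Int.cast_neg, map_intCast]
    rw [hsym' j hj]
    ring_nf
  -- the pointwise identity
  have hpt : ∀ ω ∈ Set.Icc (0 : ℝ) (1 / 2),
      ‖Γq ω - Γ ω‖ ^ 2 =
        (Gq ω - G ω) ^ 2 + 2 * Gq ω * G ω * (1 - Real.cos (θq ω)) := by
    intro ω hω
    rw [Complex.sq_norm, hθ ω, ← hΓreal ω, ← hG ω]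
    exact normSq_polar_sub (Gq ω) (G ω) (θq ω)
  have hpt2 : ∀ ω ∈ Set.Icc (0 : ℝ) (1 / 2),
      ‖Γq ω - Γ ω‖ ^ 2 =
        (Gq ω - G ω) ^ 2 + 4 * Gq ω * G ω * Real.sin (θq ω / 2) ^ 2 := by
    intro ω hω
    rw [hpt ω hω, one_sub_cos_eq (θq ω)]
    ring
  refine ⟨fun ω hω => ⟨hpt ω hω, hpt2 ω hω⟩, ?_⟩
  -- continuity of the pieces
  have hΓcont : Continuous Γ := by
    rw [funext hΓ]
    exact continuous_finset_sum _ fun j _ => by fun_prop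
  have hΓqcont : Continuous Γq := by
    rw [funext hΓq]
    exact continuous_finset_sum _ fun j _ => by fun_prop
  have hGcont : Continuous G := by
    rw [funext hG]; fun_prop
  have hGqcont : Continuous Gq := by
    rw [funext hGq]
    exact continuous_norm.comp hΓqcont
  have hIntA : IntervalIntegrable (fun ω => ‖Γq ω - Γ ω‖ ^ 2)
      volume 0 (1/2) :=
    ((continuous_norm.comp (hΓqcont.sub hΓcont)).pow 2).intervalIntegrable _ _
  have hIntB : IntervalIntegrable (fun ω => (Gq ω - G ω) ^ 2) volume 0 (1/2) := by
    apply Continuous.intervalIntegrable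
    fun_prop
  have hcongr : ∫ ω in (0:ℝ)..(1/2), 4 * (Gq ω * G ω * Real.sin (θq ω / 2) ^ 2) =
      ∫ ω in (0:ℝ)..(1/2), (‖Γq ω - Γ ω‖ ^ 2 - (Gq ω - G ω) ^ 2) := by
    apply intervalIntegral.integral_congr
    intro ω hω
    rw [Set.uIcc_of_le (by norm_num : (0:ℝ) ≤ 1/2)] at hω
    simp only
    rw [hpt2 ω hω]
    ring
  rw [intervalIntegral.integral_const_mul, intervalIntegral.integral_sub hIntA hIntB] at hcongr
  linarith
end
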